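/- Forward direction of the kSUM reduction for two machines: let x_1,…,x_h be positive integers, let T = Σ_{i=1}^h x_i, and let k, B be positive integers with 1 ≤ k < h and B < T. Consider the two-machine JIT flow-shop instance with kh+1 jobs: for each i ∈ {1,…,k} and j ∈ {1,…,h} a job J_{ij} with p^(1)_{ij} = x_j, p^(2)_{ij} = 1, w_{ij} = T + x_j, d_{ij} = iT; and a job J_{kh+1} with p^(1)_{kh+1} = (k+1)T − B, p^(2)_{kh+1} = 1, w_{kh+1} = k²(T+1)², d_{kh+1} = (k+1)T + 1. If there exist indices j_1,…,j_k ∈ {1,…,h} (not necessarily distinct) with x_{j_1} + … + x_{j_k} = B, then this instance admits a feasible set E with Σ_{j∈E} w_j ≥ kT + B + k²(T+1)². -/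

import Mathlib

/-!
Take the jobs `J_{i, f i}` for `i = 1, …, k` together with the long job `J_{kh+1}`. Machine 1
processes them back to back in this order; since `x_{f 1} + ⋯ + x_{f k} = B`, the long job
starts at `B` and completes at `(k+1)T`, just in time for its unit operation on machine 2,
while every `J_{i, f i}` completes on machine 1 by time `B ≤ iT - 1` and occupies machine 2
during `(iT - 1, iT]`. The weight collected is `∑ᵢ (T + x_{f i}) + k²(T+1)² = kT + B + k²(T+1)²`.
-/

open Finset

/-- A just-in-time flow-shop instance on `m` machines with jobs of type `J`:
`p i j` is the (positive integer) processing time of job `j` on machine `i`,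
`d j` its positive integer due date and `w j` its positive integer weight. -/
structure JITInstance (m : ℕ) (J : Type) where
  p : Fin m → J → ℕ
  d : J → ℕ
  w : J → ℕ
  p_pos : ∀ i j, 0 < p i j
  d_pos : ∀ j, 0 < d j
  w_pos : ∀ j, 0 < w j

/-- `S` is a JIT schedule of the job set `E`: on every machine the processing
intervals `(S i j, S i j + p i j]` of distinct jobs of `E` are pairwise disjoint,
each job's operation on machine `i+1` starts no earlier than its completion on
machine `i`, and every job of `E` completes on the last machine exactly at its
due date.  (Start times are nonnegative automatically, being naturals.) -/
def IsJITSchedule {m : ℕ} {J : Type} (I : JITInstance m J)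
    (E : Finset J) (S : Fin m → J → ℕ) : Prop :=
  (∀ i : Fin m, ∀ j ∈ E, ∀ j' ∈ E, j ≠ j' →
      S i j + I.p i j ≤ S i j' ∨ S i j' + I.p i j' ≤ S i j) ∧
  (∀ j ∈ E, ∀ i i' : Fin m, i'.val = i.val + 1 →
      S i j + I.p i j ≤ S i' j) ∧
  (∀ j ∈ E, ∀ i : Fin m, i.val = m - 1 →
      S i j + I.p i j = I.d j)

/-- A job set is feasible if it admits a JIT schedule. -/
def Feasible {m : ℕ} {J : Type} (I : JITInstance m J) (E : Finset J) : Prop :=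
  ∃ S : Fin m → J → ℕ, IsJITSchedule I E S

/-- The two-machine JIT flow-shop instance constructed in the kSUM reduction:
for each `i ∈ {1,…,k}`, `j ∈ {1,…,h}` a job `J_{ij}` (encoded `Sum.inl (i, j)`,
0-indexed) with `p¹ = x j`, `p² = 1`, `w = T + x j`, `d = iT`, and one extra
job `J_{kh+1}` (encoded `Sum.inr ()`) with `p¹ = (k+1)T - B`, `p² = 1`,
`w = k²(T+1)²`, `d = (k+1)T + 1`, where `T = ∑ i, x i`. -/
def ksumInstance2 (h k B : ℕ) (x : Fin h → ℕ) (hx : ∀ i, 0 < x i)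
    (hk : 1 ≤ k) (hB : 0 < B) (hBT : B < ∑ i, x i) :
    JITInstance 2 (Fin k × Fin h ⊕ Unit) where
  p := fun i jb =>
    if i.val = 0 then
      Sum.elim (fun q => x q.2) (fun _ => (k + 1) * (∑ i, x i) - B) jb
    else 1
  d := Sum.elim (fun q => (q.1.val + 1) * (∑ i, x i))
    (fun _ => (k + 1) * (∑ i, x i) + 1)
  w := Sum.elim (fun q => (∑ i, x i) + x q.2)
    (fun _ => k ^ 2 * ((∑ i, x i) + 1) ^ 2)
  p_pos := by
    intro i jb
    try dsimp only
    split
    · rcases jb with ⟨a, j⟩ | u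
      · simpa using hx j
      · simp only [Sum.elim_inr]
        have h1 : (∑ i, x i) ≤ (k + 1) * (∑ i, x i) :=
          Nat.le_mul_of_pos_left _ (by omega)
        omega
    · exact one_pos
  d_pos := by
    rintro (⟨a, j⟩ | u)
    · simp only [Sum.elim_inl]
      exact Nat.mul_pos (by omega) (by omega)
    · simp only [Sum.elim_inr]
      omega
  w_pos := by
    rintro (⟨a, j⟩ | u)
    · simp only [Sum.elim_inl]
      have := hx j
      omega
    · simp only [Sum.elim_inr]
      exact Nat.mul_pos (pow_pos (by omega : 0 < k) 2)
        (pow_pos (by omega : 0 < (∑ i, x i) + 1) 2)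

open Function

namespace JITInstance

theorem feasible_map_of_sequential {m n : ℕ} {J : Type} (I : JITInstance m J)
    (g : Fin n ↪ J) (S : Fin m → Fin n → ℕ)
    (hseq : ∀ i a b, a < b → S i a + I.p i (g a) ≤ S i b)
    (hflow : ∀ a (i i' : Fin m), i'.val = i.val + 1 → S i a + I.p i (g a) ≤ S i' a)
    (hdue : ∀ a (i : Fin m), i.val = m - 1 → S i a + I.p i (g a) = I.d (g a)) :
    Feasible I (univ.map g) := by
  refine ⟨fun i => extend g (S i) 0, ?_, ?_, ?_⟩ <;>
    simp only [mem_map, mem_univ, true_and, forall_exists_index, forall_apply_eq_imp_iff,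
      g.injective.extend_apply]
  · intro i a b hab
    rcases lt_or_gt_of_ne (fun h => hab (congrArg g h)) with h | h
    exacts [.inl (hseq i a b h), .inr (hseq i b a h)]
  · exact hflow
  · exact hdue

/-- Machine 1 processes the jobs back to back from time 0, machine 2 as late as possible. -/
theorem feasible_map_of_prefix_sums {n : ℕ} {J : Type} (I : JITInstance 2 J) (g : Fin n ↪ J)
    (hflow : ∀ a, ∑ l ∈ Iic a, I.p 0 (g l) + I.p 1 (g a) ≤ I.d (g a))
    (hdue : ∀ a b, a < b → I.d (g a) + I.p 1 (g b) ≤ I.d (g b)) :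
    Feasible I (univ.map g) := by
  have hback (a : Fin n) : ∑ l ∈ Iio a, I.p 0 (g l) + I.p 0 (g a) = ∑ l ∈ Iic a, I.p 0 (g l) :=
    sum_Iio_add_eq_sum_Iic a
  refine I.feasible_map_of_sequential g
    ![fun a => ∑ l ∈ Iio a, I.p 0 (g l), fun a => I.d (g a) - I.p 1 (g a)] ?_ ?_ ?_
  · intro i a b hab
    fin_cases i
    · simp only [Fin.zero_eta, Fin.isValue, Matrix.cons_val_zero, hback]
      exact sum_le_sum_of_subset fun l hl => mem_Iio.2 ((mem_Iic.1 hl).trans_lt hab)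
    · have := hflow a
      have := hdue a b hab
      simp only [Fin.mk_one, Fin.isValue, Matrix.cons_val_one, Matrix.cons_val_fin_one]
      omega
  · intro a i i' hi
    obtain rfl : i = 0 := Fin.ext (by omega)
    obtain rfl : i' = 1 := Fin.ext (by omega)
    have := hflow a
    simp only [Fin.isValue, Matrix.cons_val_zero, Matrix.cons_val_one, Matrix.cons_val_fin_one,
      hback]
    omega
  · intro a i hi
    obtain rfl : i = 1 := Fin.ext (by omega)
    have := hflow a
    simp only [Fin.isValue, Matrix.cons_val_one, Matrix.cons_val_fin_one]
    omega

end JITInstance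

section Reduction

variable {h k B : ℕ} {x : Fin h → ℕ}

def ksumJobs (f : Fin k → Fin h) : Fin (k + 1) ↪ Fin k × Fin h ⊕ Unit where
  toFun := Fin.lastCases (Sum.inr ()) fun a => Sum.inl (a, f a)
  inj' a b := by
    induction a using Fin.lastCases <;> induction b using Fin.lastCases <;> simp +contextual

@[simp] theorem ksumJobs_castSucc (f : Fin k → Fin h) (a : Fin k) :
    ksumJobs f a.castSucc = Sum.inl (a, f a) :=
  Fin.lastCases_castSucc (motive := fun _ => Fin k × Fin h ⊕ Unit) ..

@[simp] theorem ksumJobs_last (f : Fin k → Fin h) : ksumJobs f (Fin.last k) = Sum.inr () :=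
  Fin.lastCases_last (motive := fun _ => Fin k × Fin h ⊕ Unit) ..

theorem ksumInstance2_flow (hx : ∀ i, 0 < x i) (hk : 1 ≤ k) (hB : 0 < B)
    (hBT : B < ∑ i, x i) {f : Fin k → Fin h} (hf : ∑ i, x (f i) = B) (a : Fin (k + 1)) :
    ∑ l ∈ Iic a, (ksumInstance2 h k B x hx hk hB hBT).p 0 (ksumJobs f l)
        + (ksumInstance2 h k B x hx hk hB hBT).p 1 (ksumJobs f a)
      ≤ (ksumInstance2 h k B x hx hk hB hBT).d (ksumJobs f a) := by
  have hshort : ∑ l ∈ Iio (Fin.last k), (ksumInstance2 h k B x hx hk hB hBT).p 0 (ksumJobs f l)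
      = B := by
    simp [Fin.Iio_last_eq_map, ksumInstance2, hf]
  induction a using Fin.lastCases with
  | last =>
    have : B ≤ (k + 1) * ∑ i, x i := hBT.le.trans (Nat.le_mul_of_pos_left _ k.succ_pos)
    rw [← sum_Iio_add_eq_sum_Iic, hshort]
    simp only [ksumInstance2, ksumJobs_last, Fin.val_eq_zero_iff, Fin.isValue, ↓reduceIte,
      one_ne_zero, Sum.elim_inr]
    omega
  | cast c =>
    have hprefix : ∑ l ∈ Iic c.castSucc, (ksumInstance2 h k B x hx hk hB hBT).p 0 (ksumJobs f l)
        ≤ B :=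
      hshort.le.trans' <| sum_le_sum_of_subset fun l hl =>
        mem_Iio.2 ((mem_Iic.1 hl).trans_lt c.castSucc_lt_last)
    have : ∑ i, x i ≤ (c.val + 1) * ∑ i, x i := Nat.le_mul_of_pos_left _ c.val.succ_pos
    simp only [ksumInstance2, ksumJobs_castSucc, Fin.val_eq_zero_iff, Fin.isValue, ↓reduceIte,
      one_ne_zero, Sum.elim_inl] at hprefix ⊢
    omega

theorem ksumInstance2_due (hx : ∀ i, 0 < x i) (hk : 1 ≤ k) (hB : 0 < B)
    (hBT : B < ∑ i, x i) (f : Fin k → Fin h) {a b : Fin (k + 1)} (hab : a < b) :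
    (ksumInstance2 h k B x hx hk hB hBT).d (ksumJobs f a)
        + (ksumInstance2 h k B x hx hk hB hBT).p 1 (ksumJobs f b)
      ≤ (ksumInstance2 h k B x hx hk hB hBT).d (ksumJobs f b) := by
  induction a using Fin.lastCases with
  | last => exact absurd hab (Fin.le_last b).not_gt
  | cast c =>
    induction b using Fin.lastCases with
    | last =>
      have hc : c.val + 1 ≤ k + 1 := Nat.succ_le_succ c.isLt.le
      simpa [ksumInstance2] using Nat.mul_le_mul_right (∑ i, x i) hc
    | cast c' =>
      have hcc' : c.val + 1 ≤ c'.val := Fin.castSucc_lt_castSucc_iff.1 hab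
      have hT : 1 ≤ ∑ i, x i := hB.trans hBT
      have := Nat.mul_le_mul_right (∑ i, x i) hcc'
      simp only [ksumInstance2, ksumJobs_castSucc, Fin.val_eq_zero_iff, Fin.isValue, ↓reduceIte,
        one_ne_zero, Sum.elim_inl, add_one_mul] at this ⊢
      omega

theorem ksumInstance2_weight (hx : ∀ i, 0 < x i) (hk : 1 ≤ k) (hB : 0 < B)
    (hBT : B < ∑ i, x i) {f : Fin k → Fin h} (hf : ∑ i, x (f i) = B) :
    ∑ jb ∈ univ.map (ksumJobs f), (ksumInstance2 h k B x hx hk hB hBT).w jb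
      = k * (∑ i, x i) + B + k ^ 2 * ((∑ i, x i) + 1) ^ 2 := by
  simp [Fin.sum_univ_castSucc, ksumInstance2, sum_add_distrib, hf]

end Reduction

theorem ksum_two_machines_forward (h k B : ℕ) (x : Fin h → ℕ)
    (hx : ∀ i, 0 < x i) (hk : 1 ≤ k) (hB : 0 < B)
    (hBT : B < ∑ i, x i)
    (f : Fin k → Fin h) (hf : ∑ i, x (f i) = B) :
    ∃ E : Finset (Fin k × Fin h ⊕ Unit),
      Feasible (ksumInstance2 h k B x hx hk hB hBT) E ∧
      k * (∑ i, x i) + B + k ^ 2 * ((∑ i, x i) + 1) ^ 2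
        ≤ ∑ jb ∈ E, (ksumInstance2 h k B x hx hk hB hBT).w jb :=
  ⟨univ.map (ksumJobs f),
    JITInstance.feasible_map_of_prefix_sums _ _ (ksumInstance2_flow hx hk hB hBT hf)
      fun _ _ => ksumInstance2_due hx hk hB hBT f,
    (ksumInstance2_weight hx hk hB hBT hf).ge⟩
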